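/- Let G be a countable discrete FC-group (every conjugacy class of G is finite) and let m ∈ ℕ. For any finite partition G^m = C₁ ∪ … ∪ C_r, there exists j such that the set { g ∈ G : ∃ (x₁, …, x_m) ∈ G^m, {(x₁,…,x_m), (x₁g, x₂, …, x_m), (x₁g, x₂g, x₃, …, x_m), …, (x₁g, x₂g, …, x_mg)} ⊆ C_j } is left IP*. -/

import Mathlib

/-- The product of `x_n` over `F` with indices taken in decreasing order. -/
def prodDec {G : Type*} [Group G] (F : Finset ℕ) (x : ℕ → G) : G :=
  ((F.sort (· ≤ ·)).reverse.map x).prod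

/-- The left finite product set of a sequence `(x_n)` in `G`. -/
def FPL {G : Type*} [Group G] (x : ℕ → G) : Set G :=
  { g | ∃ F : Finset ℕ, F.Nonempty ∧ g = prodDec F x }

/-- `X` is left IP*: it meets every `FP_L(x_n)`. -/
def leftIPStar {G : Type*} [Group G] (X : Set G) : Prop :=
  ∀ x : ℕ → G, (X ∩ FPL x).Nonempty

/-- The `i`-th point of the right corner configuration in `G^m`:
the first `i` coordinates of `x` are multiplied by `g` on the right. -/
def cornerPt {G : Type*} [Group G] {m : ℕ} (x : Fin m → G) (g : G) (i : ℕ) : Fin m → G :=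
  fun t => if (t : ℕ) < i then x t * g else x t

/-! Let `c` choose for each point of `G^m` a cell of the partition containing it. A point `ω` of
a minimal closed subsystem of the orbit closure of `c` under left translations is uniformly
recurrent: its color `ω 1` recurs with finitely many gaps `K`. Given `(y_n)`, the FC property
yields a block sequence `(w_n)` of `(y_n)` whose terms commute with each other and with the
coordinates of the gaps. Coding words over `{0, …, m}` by products of the `w_n`, the Hales–Jewett
theorem turns a combinatorial line into a corner of `ω`-color `ω 1` whose step lies in
`FP_L(w) ⊆ FP_L(y)`; as `ω` is a limit of translates of `c`, a translate of that corner has color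
`ω 1` for `c`. -/

open Finset

theorem Finset.sort_union_of_forall_lt {α : Type*} [LinearOrder α] {s t : Finset α}
    (h : ∀ i ∈ s, ∀ j ∈ t, i < j) :
    (s ∪ t).sort (· ≤ ·) = s.sort (· ≤ ·) ++ t.sort (· ≤ ·) := by
  have hdisj : ∀ a ∈ s.sort (· ≤ ·), a ∉ t.sort (· ≤ ·) := fun a ha hb =>
    lt_irrefl a (h a (mem_sort _ |>.1 ha) a (mem_sort _ |>.1 hb))
  refine List.Perm.eq_of_pairwise' (pairwise_sort _ _) ?_ ?_
  · refine List.pairwise_append.2 ⟨pairwise_sort _ _, pairwise_sort _ _, fun a ha b hb => ?_⟩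
    exact (h a ((mem_sort _).1 ha) b ((mem_sort _).1 hb)).le
  · refine (List.perm_ext_iff_of_nodup (sort_nodup _ _)
      ((sort_nodup _ _).append (sort_nodup _ _) fun a ha hb => hdisj a ha hb)).2 fun a => ?_
    simp only [List.mem_append, mem_sort, mem_union]

section prodDec

variable {G : Type*} [Group G] (x : ℕ → G)

lemma prodDec_empty : prodDec ∅ x = 1 := by
  simp [prodDec]

lemma prodDec_singleton (n : ℕ) : prodDec {n} x = x n := by
  simp [prodDec]

lemma prodDec_union {F₁ F₂ : Finset ℕ} (h : ∀ i ∈ F₁, ∀ j ∈ F₂, i < j) :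
    prodDec (F₁ ∪ F₂) x = prodDec F₂ x * prodDec F₁ x := by
  rw [prodDec, sort_union_of_forall_lt h, List.reverse_append, List.map_append, List.prod_append,
    prodDec, prodDec]

lemma prodDec_Ico_eq_mul_inv {s a b : ℕ} (hsa : s ≤ a) (hab : a ≤ b) :
    prodDec (Ico a b) x = prodDec (Ico s b) x * (prodDec (Ico s a) x)⁻¹ := by
  rw [← Ico_union_Ico_eq_Ico hsa hab, prodDec_union, mul_inv_cancel_right]
  intro i hi j hj
  rw [mem_Ico] at hi hj
  omega

lemma Commute.prodDec_left {h : G} (hx : ∀ n, Commute (x n) h) (F : Finset ℕ) :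
    Commute (prodDec F x) h :=
  Commute.list_prod_left _ _ fun _ hy => by
    obtain ⟨n, -, rfl⟩ := List.mem_map.1 hy
    exact hx n

lemma prodDec_eq_noncommProd (hx : ∀ a b, Commute (x a) (x b)) (F : Finset ℕ) :
    prodDec F x = F.noncommProd x fun a _ b _ _ => hx a b := by
  have hval : ((((F.sort (· ≤ ·)).reverse.map x : List G)) : Multiset G) = F.val.map x := by
    rw [← Multiset.map_coe, Multiset.coe_reverse, sort_eq]
  rw [prodDec,
    ← Multiset.noncommProd_coe _ (hval ▸ noncommProd_lemma F x fun a _ b _ _ => hx a b)]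
  show Multiset.noncommProd _ _ = Multiset.noncommProd _ _
  congr 1

lemma prodDec_union_of_disjoint (hx : ∀ a b, Commute (x a) (x b)) {F₁ F₂ : Finset ℕ}
    (h : Disjoint F₁ F₂) : prodDec (F₁ ∪ F₂) x = prodDec F₁ x * prodDec F₂ x := by
  simp only [prodDec_eq_noncommProd x hx]
  exact noncommProd_union_of_disjoint h x _

end prodDec

section FCGroup

variable {G : Type*} [Group G]

lemma mul_inv_mem_centralizer_of_conj_eq {Z : Set G} {p q : G}
    (h : ∀ z ∈ Z, p⁻¹ * z * p = q⁻¹ * z * q) : q * p⁻¹ ∈ Subgroup.centralizer Z := by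
  refine Subgroup.mem_centralizer_iff.2 fun z hz => ?_
  calc z * (q * p⁻¹) = q * (q⁻¹ * z * q) * p⁻¹ := by group
    _ = q * (p⁻¹ * z * p) * p⁻¹ := by rw [h z hz]
    _ = q * p⁻¹ * z := by group

/-- Conjugation by the partial products `prodDec (Ico s n) y` acts on the finite set `Z` in only
finitely many ways, so two of them agree and the block between them centralizes `Z`. -/
lemma exists_prodDec_Ico_mem_centralizer
    (hFC : ∀ g : G, (Set.range fun x : G => x * g * x⁻¹).Finite)
    (y : ℕ → G) {Z : Set G} (hZ : Z.Finite) (s : ℕ) :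
    ∃ a b, s ≤ a ∧ a < b ∧ prodDec (Ico a b) y ∈ Subgroup.centralizer Z := by
  have : Finite Z := hZ.to_subtype
  set p : ℕ → G := fun n => prodDec (Ico s n) y
  have hmaps : Set.MapsTo (fun n (z : Z) => (p n)⁻¹ * z * p n) (Set.Ici s)
      (Set.univ.pi fun z : Z => Set.range fun x : G => x * z * x⁻¹) :=
    fun n _ z _ => ⟨(p n)⁻¹, by simp⟩
  obtain ⟨n₁, hn₁, n₂, hn₂, hne, hconj⟩ :=
    (Set.Ici_infinite s).exists_ne_map_eq_of_mapsTo hmaps (Set.Finite.pi fun z => hFC z)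
  wlog hlt : n₁ < n₂ generalizing n₁ n₂
  · exact this n₂ hn₂ n₁ hn₁ hne.symm hconj.symm (hne.lt_or_gt.resolve_left hlt)
  refine ⟨n₁, n₂, hn₁, hlt, ?_⟩
  rw [prodDec_Ico_eq_mul_inv y hn₁ hlt.le]
  exact mul_inv_mem_centralizer_of_conj_eq fun z hz => congrFun hconj ⟨z, hz⟩

lemma FPL_prodDec_Ico_subset (y : ℕ → G) {a b : ℕ → ℕ} (hab : ∀ k, a k < b k)
    (hba : ∀ k, b k ≤ a (k + 1)) :
    FPL (fun k => prodDec (Ico (a k) (b k)) y) ⊆ FPL y := by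
  have hmono : StrictMono a := strictMono_nat_of_lt_succ fun k => (hab k).trans_le (hba k)
  have hsep : ∀ t k, t < k → b t ≤ a k := fun t k htk => (hba t).trans (hmono.monotone htk)
  have hprod : ∀ F : Finset ℕ, prodDec F (fun k => prodDec (Ico (a k) (b k)) y) =
      prodDec (F.biUnion fun k => Ico (a k) (b k)) y := by
    intro F
    induction F using Finset.induction_on_max with
    | empty => simp [prodDec_empty]
    | insert n F hn ih =>
      have hsepF : ∀ i ∈ F.biUnion fun k => Ico (a k) (b k), ∀ j ∈ Ico (a n) (b n), i < j := by
        intro i hi j hj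
        obtain ⟨k, hk, hik⟩ := mem_biUnion.1 hi
        have := hsep k n (hn k hk)
        rw [mem_Ico] at hik hj
        omega
      rw [insert_eq, union_comm, prodDec_union _ (by simpa using hn), prodDec_singleton, ih,
        union_biUnion, singleton_biUnion, prodDec_union _ hsepF]
  rintro _ ⟨F, hF, rfl⟩
  exact ⟨_, hF.biUnion fun k _ => nonempty_Ico.2 (hab k), hprod F⟩

theorem exists_commuting_FPL_subset
    (hFC : ∀ g : G, (Set.range fun x : G => x * g * x⁻¹).Finite)
    (y : ℕ → G) {Z : Set G} (hZ : Z.Finite) :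
    ∃ w : ℕ → G, (∀ a b, Commute (w a) (w b)) ∧ (∀ n, w n ∈ Subgroup.centralizer Z) ∧
      FPL w ⊆ FPL y := by
  classical
  choose a b hsa hab hcent using fun p : ℕ × Finset G =>
    exists_prodDec_Ico_mem_centralizer hFC y (hZ.union p.2.finite_toSet) p.1
  -- the state after `k` steps: where the next block may start, and the blocks chosen so far
  let st : ℕ → ℕ × Finset G := fun k =>
    Nat.rec (0, ∅) (fun _ p => (b p, insert (prodDec (Ico (a p) (b p)) y) p.2)) k
  let w : ℕ → G := fun k => prodDec (Ico (a (st k)) (b (st k))) y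
  have hprev : ∀ t k, t < k → w t ∈ (st k).2 := by
    intro t k htk
    induction k with
    | zero => omega
    | succ k ih =>
      rcases Nat.lt_succ_iff_lt_or_eq.1 htk with h | rfl
      · exact mem_insert_of_mem (ih h)
      · exact mem_insert_self _ _
  have hcomm : ∀ t k, t < k → Commute (w t) (w k) := fun t k htk =>
    Subgroup.mem_centralizer_iff.1 (hcent (st k)) _ (Or.inr (hprev t k htk))
  refine ⟨w, fun s t => ?_, fun n => Subgroup.centralizer_le Set.subset_union_left (hcent _),
    FPL_prodDec_Ico_subset y (fun k => hab (st k)) (fun k => hsa (st (k + 1)))⟩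
  rcases lt_trichotomy s t with h | rfl | h
  exacts [hcomm s t h, Commute.refl _, (hcomm t s h).symm]

end FCGroup

section Corners

variable {G : Type*} [Group G] {m : ℕ}

lemma mul_cornerPt (b x : Fin m → G) (g : G) (i : ℕ) :
    b * cornerPt x g i = cornerPt (b * x) g i := by
  funext t
  simp only [cornerPt, Pi.mul_apply]
  split_ifs <;> simp [mul_assoc]

lemma cornerPt_mul_of_commute (x : Fin m → G) {g : G} {k : Fin m → G}
    (hg : ∀ t, Commute g (k t)) (i : ℕ) : cornerPt x g i * k = cornerPt (x * k) g i := by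
  funext t
  simp only [cornerPt, Pi.mul_apply]
  split_ifs
  · rw [mul_assoc, (hg t).eq, mul_assoc]
  · rfl

def wordPt {ι : Type*} [Fintype ι] (e : ι ↪ ℕ) (w : ℕ → G) (v : ι → Fin (m + 1)) : Fin m → G :=
  fun t => prodDec ((univ.filter fun i => (t : ℕ) < v i).map e) w

lemma wordPt_line {ι : Type*} [Fintype ι] (e : ι ↪ ℕ) {w : ℕ → G}
    (hw : ∀ a b, Commute (w a) (w b)) (l : Combinatorics.Line (Fin (m + 1)) ι) (x : Fin (m + 1)) :
    wordPt e w (l x) = cornerPt (wordPt e w (l 0))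
      (prodDec ((univ.filter fun i => l.idxFun i = none).map e) w) x := by
  classical
  funext t
  simp only [wordPt, cornerPt]
  split_ifs with htx
  · have hsplit : univ.filter (fun i => (t : ℕ) < l x i) =
        univ.filter (fun i => (t : ℕ) < l 0 i) ∪ univ.filter (fun i => l.idxFun i = none) := by
      ext i
      simp only [mem_filter, mem_univ, true_and, mem_union]
      cases h : l.idxFun i <;> simp [h, htx]
    rw [hsplit, map_union, prodDec_union_of_disjoint w hw]
    rw [disjoint_map, disjoint_filter]
    intro i _ h0 hnone
    simp [hnone] at h0
  · have hsame :
        univ.filter (fun i => (t : ℕ) < l x i) = univ.filter (fun i => (t : ℕ) < l 0 i) := by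
      ext i
      simp only [mem_filter, mem_univ, true_and]
      cases h : l.idxFun i <;> simp [h]
      omega
    rw [hsame]

/-- Hales–Jewett for the coloring that sends a word `v` to a gap `k ∈ K` with
`P (wordPt e w v * k)`. -/
theorem exists_cornerPt_of_syndetic {P : (Fin m → G) → Prop} {K : Finset (Fin m → G)}
    (hK : ∀ γ, ∃ k ∈ K, P (γ * k)) {w : ℕ → G} (hw : ∀ a b, Commute (w a) (w b))
    (hwK : ∀ n, ∀ k ∈ K, ∀ t, Commute (w n) (k t)) :
    ∃ x, ∃ g ∈ FPL w, ∀ i ≤ m, P (cornerPt x g i) := by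
  classical
  obtain ⟨ι, _, hHJ⟩ := Combinatorics.Line.exists_mono_in_high_dimension (Fin (m + 1)) K
  let e : ι ↪ ℕ := (Fintype.equivFin ι).toEmbedding.trans Fin.valEmbedding
  choose k hkK hk using hK
  obtain ⟨l, k₀, hl⟩ := hHJ fun v => ⟨k (wordPt e w v), hkK _⟩
  set F := (univ.filter fun i => l.idxFun i = none).map e
  refine ⟨wordPt e w (l 0) * k₀, prodDec F w, ⟨F, ?_, rfl⟩, fun i hi => ?_⟩
  · obtain ⟨i, hi⟩ := l.proper
    exact ⟨e i, mem_map_of_mem _ (mem_filter.2 ⟨mem_univ _, hi⟩)⟩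
  · have hgk : ∀ t, Commute (prodDec F w) (k₀.1 t) :=
      fun t => Commute.prodDec_left w (fun n => hwK n _ k₀.2 t) F
    have hx := hk (wordPt e w (l ⟨i, Nat.lt_succ_of_le hi⟩))
    rwa [show k _ = k₀.1 from congrArg Subtype.val (hl _), wordPt_line e hw,
      cornerPt_mul_of_commute _ hgk] at hx

end Corners

theorem exists_minimal_isClosed_mapsTo {X ι : Type*} [TopologicalSpace X] [CompactSpace X]
    (T : ι → X → X) {Y : Set X} (hYc : IsClosed Y) (hYne : Y.Nonempty)
    (hY : ∀ i, Set.MapsTo (T i) Y Y) :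
    ∃ Y₀ ⊆ Y, Minimal (fun Z => IsClosed Z ∧ Z.Nonempty ∧ ∀ i, Set.MapsTo (T i) Z Z) Y₀ := by
  refine zorn_superset_nonempty _ (fun c hcS hc hcne => ?_) Y ⟨hYc, hYne, hY⟩
  have hclosed : ∀ Z ∈ c, IsClosed Z := fun Z hZ => (hcS hZ).1
  refine ⟨⋂₀ c, ⟨isClosed_sInter hclosed, ?_, fun i x hx => ?_⟩,
    fun Z hZ => Set.sInter_subset_of_mem hZ⟩
  · have : Nonempty c := hcne.to_subtype
    have hdir : DirectedOn (· ⊇ ·) c := fun x hx y hy =>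
      (hc.total hx hy).elim (fun h => ⟨x, hx, subset_rfl, h⟩) fun h => ⟨y, hy, h, subset_rfl⟩
    exact IsCompact.nonempty_sInter_of_directed_nonempty_isCompact_isClosed hdir
      (fun Z hZ => (hcS hZ).2.1) (fun Z hZ => (hclosed Z hZ).isCompact) hclosed
  · exact Set.mem_sInter.2 fun Z hZ => (hcS hZ).2.2 i (Set.mem_sInter.1 hx Z hZ)

lemma isOpen_setOf_apply_eq {ι α : Type*} [TopologicalSpace α] [DiscreteTopology α] (i : ι)
    (v : α) : IsOpen {ψ : ι → α | ψ i = v} :=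
  (isOpen_discrete {v}).preimage (continuous_apply (A := fun _ => α) i)

section Recurrence

variable {M α : Type*} [Monoid M] [TopologicalSpace α]

def orbitClosure (χ : M → α) : Set (M → α) :=
  closure (Set.range fun a => χ ∘ (a * ·))

lemma self_mem_orbitClosure (χ : M → α) : χ ∈ orbitClosure χ :=
  subset_closure ⟨1, by simp [Function.comp_def]⟩

lemma mapsTo_orbitClosure (χ : M → α) (a : M) :
    Set.MapsTo (· ∘ (a * ·)) (orbitClosure χ) (orbitClosure χ) := by
  refine Set.MapsTo.closure ?_ (continuous_pi fun γ => continuous_apply (a * γ))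
  rintro _ ⟨b, rfl⟩
  exact ⟨b * a, by simp [Function.comp_def, mul_assoc]⟩

lemma orbitClosure_subset {Y : Set (M → α)} (hYc : IsClosed Y)
    (hY : ∀ a, Set.MapsTo (· ∘ (a * ·)) Y Y) {χ : M → α} (hχ : χ ∈ Y) : orbitClosure χ ⊆ Y :=
  closure_minimal (Set.range_subset_iff.2 fun a => hY a hχ) hYc

lemma exists_eqOn_of_mem_orbitClosure [DiscreteTopology α] {χ ω : M → α}
    (hω : ω ∈ orbitClosure χ) (S : Finset M) : ∃ b, ∀ s ∈ S, χ (b * s) = ω s := by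
  have hopen : IsOpen {ψ : M → α | ∀ s ∈ S, ψ s = ω s} := by
    simp only [Set.ofPred_forall]
    exact isOpen_biInter_finset fun s _ => isOpen_setOf_apply_eq s (ω s)
  obtain ⟨_, hb, b, rfl⟩ := mem_closure_iff.1 hω _ hopen fun s _ => rfl
  exact ⟨b, hb⟩

end Recurrence

/-- `ω` is any point of a minimal closed invariant subset of the orbit closure of `c`. -/
theorem exists_uniformlyRecurrent_limit {M α : Type*} [Monoid M] [Finite α] (c : M → α) :
    ∃ ω : M → α, (∀ S : Finset M, ∃ b, ∀ s ∈ S, c (b * s) = ω s) ∧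
      ∃ K : Finset M, ∀ γ, ∃ k ∈ K, ω (γ * k) = ω 1 := by
  let _ : TopologicalSpace α := ⊥
  have : DiscreteTopology α := ⟨rfl⟩
  obtain ⟨Y, hYc, hYmin⟩ := exists_minimal_isClosed_mapsTo (fun a (χ : M → α) => χ ∘ (a * ·))
    isClosed_closure ⟨c, self_mem_orbitClosure c⟩ (mapsTo_orbitClosure c)
  obtain ⟨hYclosed, ⟨ω, hω⟩, hYinv⟩ := hYmin.1
  have hret : ∀ χ ∈ Y, ∃ a, χ a = ω 1 := by
    intro χ hχ
    have hωχ : ω ∈ orbitClosure χ := hYmin.2 ⟨isClosed_closure, ⟨χ, self_mem_orbitClosure χ⟩,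
      mapsTo_orbitClosure χ⟩ (orbitClosure_subset hYclosed hYinv hχ) hω
    obtain ⟨a, ha⟩ := exists_eqOn_of_mem_orbitClosure hωχ {1}
    exact ⟨a, by simpa using ha⟩
  obtain ⟨K, hK⟩ := hYclosed.isCompact.elim_finite_subcover (fun a => {χ : M → α | χ a = ω 1})
    (fun a => isOpen_setOf_apply_eq a (ω 1))
    fun χ hχ => Set.mem_iUnion.2 (hret χ hχ)
  refine ⟨ω, exists_eqOn_of_mem_orbitClosure (hYc hω), K, fun γ => ?_⟩
  obtain ⟨k, hk, hγk⟩ := Set.mem_iUnion₂.1 (hK (hYinv γ hω))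
  exact ⟨k, hk, hγk⟩

theorem stmt19_general {G : Type*} [Group G]
    (hFC : ∀ g : G, (Set.range fun x : G => x * g * x⁻¹).Finite)
    (m : ℕ) (r : ℕ) (C : Fin r → Set (Fin m → G))
    (hcov : ∀ z : Fin m → G, ∃ j, z ∈ C j) :
    ∃ j, leftIPStar { g : G | ∃ x : Fin m → G, ∀ i ≤ m, cornerPt x g i ∈ C j } := by
  classical
  choose c hc using hcov
  obtain ⟨ω, hωc, K, hK⟩ := exists_uniformlyRecurrent_limit c
  refine ⟨ω 1, fun y => ?_⟩
  obtain ⟨w, hw, hwK, hwy⟩ := exists_commuting_FPL_subset hFC y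
    (K.finite_toSet.biUnion fun k _ => Set.finite_range k)
  obtain ⟨x, g, hg, hx⟩ := exists_cornerPt_of_syndetic (P := fun γ => ω γ = ω 1) hK hw
    fun n k hk t => (Subgroup.mem_centralizer_iff.1 (hwK n) (k t)
      (Set.mem_iUnion₂.2 ⟨k, hk, t, rfl⟩)).symm
  obtain ⟨b, hb⟩ := hωc ((range (m + 1)).image (cornerPt x g))
  refine ⟨g, ⟨b * x, fun i hi => ?_⟩, hwy hg⟩
  have hi' : cornerPt x g i ∈ (range (m + 1)).image (cornerPt x g) :=
    mem_image_of_mem _ (mem_range.2 (Nat.lt_succ_of_le hi))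
  rw [← mul_cornerPt, ← hx i hi, ← hb _ hi']
  exact hc _

/-- IP-van der Waerden theorem for FC-groups: if `G` is a countable discrete FC-group
and `G^m = C₁ ∪ ⋯ ∪ C_r` is a finite partition, then for some `j` the set of `g` such that
some corner configuration `{x, (x₁g,x₂,…), (x₁g,x₂g,…), …, (x₁g,…,x_mg)}` lies in `C_j`
is left IP*. -/
theorem stmt19 {G : Type*} [Group G] [Countable G]
    (hFC : ∀ g : G, (Set.range fun x : G => x * g * x⁻¹).Finite)
    (m : ℕ) (r : ℕ) (C : Fin r → Set (Fin m → G))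
    (hcov : ∀ z : Fin m → G, ∃ j, z ∈ C j) :
    ∃ j, leftIPStar { g : G | ∃ x : Fin m → G, ∀ i ≤ m, cornerPt x g i ∈ C j } :=
  stmt19_general hFC m r C hcov
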